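/- arXiv:1212.4816 — 8 statements merged into one kernel-verified Lean document; each statement's English description precedes it below -/
import Mathlib

section
/- Let m ≥ 3 and n ≥ 3 be integers. Then the determinant of the adjacency matrix of the Cartesian product C_m □ C_n of the cycle graphs on m and n vertices equals 4^gcd(m,n) if both m and n are odd, and equals 0 otherwise. -/
/-!
The vectors `(ω ^ (j * a))_a`, for `ω` a primitive `m`-th root of unity, diagonalise the cycle
`C_m` with eigenvalues `ω ^ j + ω ^ (-j)`; their Kronecker products diagonalise `C_m □ C_n`, whose
eigenvalues are therefore the sums `ω ^ j + ω ^ (-j) + ζ ^ k + ζ ^ (-k)`. If `m` is even, the pair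
`j = m / 2`, `k = 0` gives the eigenvalue `0`, and likewise if `n` is even. If both are odd, the
factorisation `ω ^ j + ω ^ (-j) + c + c⁻¹ = (c + ω ^ j) (c⁻¹ + ω ^ j) / ω ^ j` and
`∏ j, (x + ω ^ j) = x ^ m + 1` collapse the product over `j` to `(1 + c ^ m) ^ 2 / c ^ m`. With
`c = ζ ^ k`, the numbers `ζ ^ (m k)` run `gcd m n` times through the `n / gcd m n`-th roots of
unity, so the product over `k` is `(2 ^ gcd m n) ^ 2`.
-/

open Finset Matrix SimpleGraph
open scoped Kronecker

namespace SimpleGraph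

theorem adjMatrix_map {V R S : Type*} (G : SimpleGraph V) [DecidableRel G.Adj]
    [Zero R] [One R] [Zero S] [One S] {f : R → S} (h0 : f 0 = 0) (h1 : f 1 = 1) :
    (G.adjMatrix R).map f = G.adjMatrix S := by
  ext u v
  by_cases h : G.Adj u v <;> simp [h, h0, h1]

section BoxProd

variable {α β R : Type*} [DecidableEq α] [DecidableEq β] {G : SimpleGraph α} {H : SimpleGraph β}
  [DecidableRel G.Adj] [DecidableRel H.Adj] [DecidableRel (G □ H).Adj]

theorem adjMatrix_boxProd [NonAssocSemiring R] :
    (G □ H).adjMatrix R = G.adjMatrix R ⊗ₖ 1 + 1 ⊗ₖ H.adjMatrix R := by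
  ext ⟨a, b⟩ ⟨a', b'⟩
  by_cases ha : a = a' <;> by_cases hb : b = b' <;>
    simp [adjMatrix_apply, boxProd_adj, one_apply, ha, hb]

theorem kronecker_mul_adjMatrix_boxProd [Fintype α] [Fintype β] [CommSemiring R]
    {W₁ : Matrix α α R} {W₂ : Matrix β β R} {d₁ : α → R} {d₂ : β → R}
    (h₁ : W₁ * G.adjMatrix R = diagonal d₁ * W₁) (h₂ : W₂ * H.adjMatrix R = diagonal d₂ * W₂) :
    (W₁ ⊗ₖ W₂) * (G □ H).adjMatrix R = diagonal (fun p ↦ d₁ p.1 + d₂ p.2) * (W₁ ⊗ₖ W₂) := by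
  have hd : diagonal (fun p : α × β ↦ d₁ p.1 + d₂ p.2) = diagonal d₁ ⊗ₖ 1 + 1 ⊗ₖ diagonal d₂ := by
    simp only [← diagonal_one, diagonal_kronecker_diagonal, diagonal_add, mul_one, one_mul]
  rw [adjMatrix_boxProd, hd, mul_add, add_mul, ← mul_kronecker_mul, ← mul_kronecker_mul,
    ← mul_kronecker_mul, ← mul_kronecker_mul, h₁, h₂, mul_one, one_mul, mul_one, one_mul]

end BoxProd

end SimpleGraph

theorem Matrix.det_eq_prod_of_mul_eq_diagonal_mul {ι R : Type*} [Fintype ι] [DecidableEq ι]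
    [CommRing R] [IsDomain R] {W A : Matrix ι ι R} {d : ι → R} (hW : W.det ≠ 0)
    (h : W * A = diagonal d * W) : A.det = ∏ i, d i := by
  have hdet := congrArg det h
  rw [det_mul, det_mul, det_diagonal, mul_comm (∏ i, d i)] at hdet
  exact mul_left_cancel₀ hW hdet

theorem pow_val_add_of_pow_eq_one {M : Type*} [Monoid M] {x : M} {m : ℕ} [NeZero m]
    (hx : x ^ m = 1) (a b : Fin m) : x ^ (a + b : Fin m).val = x ^ a.val * x ^ b.val := by
  rw [Fin.val_add, ← pow_eq_pow_mod _ hx, pow_add]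

theorem SimpleGraph.vandermonde_mul_adjMatrix_cycleGraph {K : Type*} [Field K] {m : ℕ}
    (hm : 3 ≤ m) {ω : K} (hω : ω ^ m = 1) :
    vandermonde (fun j : Fin m ↦ ω ^ (j : ℕ)) * (cycleGraph m).adjMatrix K =
      diagonal (fun j : Fin m ↦ ω ^ (j : ℕ) + (ω ^ (j : ℕ))⁻¹) *
        vandermonde (fun j : Fin m ↦ ω ^ (j : ℕ)) := by
  obtain ⟨k, rfl⟩ : ∃ k, m = k + 3 := ⟨m - 3, by omega⟩
  ext j b
  have hne : b - 1 ≠ b + 1 := by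
    rw [Ne, sub_eq_iff_eq_add, add_assoc, left_eq_add, Fin.ext_iff, Fin.val_add, Fin.val_one]
    simp [Nat.mod_eq_of_lt (show 2 < k + 3 by omega)]
  rw [mul_adjMatrix_apply, cycleGraph_neighborFinset, sum_pair hne, diagonal_mul,
    vandermonde_apply, vandermonde_apply, vandermonde_apply]
  set x := ω ^ (j : ℕ)
  have hx : x ^ (k + 3) = 1 := by rw [← pow_mul, mul_comm, pow_mul, hω, one_pow]
  have hx0 : x ≠ 0 := by rintro h; simp [h] at hx
  have hsucc (c : Fin (k + 3)) : x ^ (c + 1 : Fin _).val = x ^ c.val * x := by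
    rw [pow_val_add_of_pow_eq_one hx, Fin.val_one, pow_one]
  have hpred : x ^ (b - 1 : Fin _).val = x ^ b.val * x⁻¹ := by
    rw [eq_mul_inv_iff_mul_eq₀ hx0, ← hsucc, sub_add_cancel]
  rw [hsucc, hpred]
  ring

theorem Finset.prod_range_mul_of_periodic {M : Type*} [CommMonoid M] {f : ℕ → M} {p : ℕ}
    (hf : Function.Periodic f p) (a : ℕ) :
    ∏ k ∈ range (a * p), f k = (∏ k ∈ range p, f k) ^ a := by
  induction a with
  | zero => simp
  | succ a ih =>
    rw [Nat.succ_mul, prod_range_add, ih, pow_succ]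
    congr 1
    exact prod_congr rfl fun k _ ↦ by rw [add_comm]; exact hf.nat_mul a k

namespace IsPrimitiveRoot

section IsDomain

variable {R : Type*} [CommRing R] [IsDomain R] {ω : R} {m : ℕ}

theorem det_vandermonde_pow_ne_zero (hω : IsPrimitiveRoot ω m) :
    (vandermonde fun j : Fin m ↦ ω ^ (j : ℕ)).det ≠ 0 :=
  det_vandermonde_ne_zero_iff.mpr fun i j h ↦ Fin.ext (hω.pow_inj i.isLt j.isLt h)

theorem prod_add_pow (hω : IsPrimitiveRoot ω m) (hm : 0 < m) (x : R) :
    ∏ j ∈ range m, (x + ω ^ j) = x ^ m - (-1) ^ m := by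
  have := congrArg (Polynomial.eval x) (X_pow_sub_C_eq_prod hω hm (rfl : (-1 : R) ^ m = _))
  simpa [Polynomial.eval_prod, sub_eq_add_neg] using this.symm

theorem prod_pow_of_odd (hω : IsPrimitiveRoot ω m) (hm : Odd m) : ∏ j ∈ range m, ω ^ j = 1 := by
  simpa [hm.neg_one_pow, hm.pos.ne'] using hω.prod_add_pow hm.pos 0

theorem pow_div_two_eq_neg_one (hω : IsPrimitiveRoot ω m) (hm : Even m) (hm0 : m ≠ 0) :
    ω ^ (m / 2) = -1 :=
  (hω.pow (Nat.pos_of_ne_zero hm0) (Nat.div_two_mul_two_of_even hm).symm).eq_neg_one_of_two_right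

end IsDomain

theorem pow_div_gcd {M : Type*} [CommMonoid M] {ζ : M} {n : ℕ} (hζ : IsPrimitiveRoot ζ n)
    {m : ℕ} (hm : m ≠ 0) : IsPrimitiveRoot (ζ ^ m) (n / n.gcd m) := by
  rw [hζ.eq_orderOf, ← orderOf_pow' ζ hm]
  exact IsPrimitiveRoot.orderOf _

theorem prod_one_add_pow_pow {R : Type*} [CommRing R] [IsDomain R] {ζ : R} {n : ℕ}
    (hζ : IsPrimitiveRoot ζ n) (hn : Odd n) {m : ℕ} (hm : m ≠ 0) :
    ∏ k ∈ range n, (1 + (ζ ^ k) ^ m) = 2 ^ n.gcd m := by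
  set d := n.gcd m
  set p := n / d
  have hη : IsPrimitiveRoot (ζ ^ m) p := hζ.pow_div_gcd hm
  have hnp : n = d * p := (Nat.mul_div_cancel' (Nat.gcd_dvd_left n m)).symm
  have hp : Odd p := (Nat.odd_mul.mp (hnp ▸ hn)).2
  have hper : Function.Periodic (fun k ↦ 1 + (ζ ^ m) ^ k) p := fun k ↦ by
    simp only [pow_add, hη.pow_eq_one, mul_one]
  calc ∏ k ∈ range n, (1 + (ζ ^ k) ^ m)
      = ∏ k ∈ range (d * p), (1 + (ζ ^ m) ^ k) := by simp only [← hnp, pow_right_comm]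
    _ = 2 ^ d := by
      rw [prod_range_mul_of_periodic hper, hη.prod_add_pow hp.pos, one_pow, hp.neg_one_pow]
      norm_num

variable {K : Type*} [Field K] {ω ζ : K} {m n : ℕ}

theorem prod_pow_add_inv_add_add_inv (hω : IsPrimitiveRoot ω m) (hm : Odd m) {c : K}
    (hc : c ≠ 0) : ∏ j ∈ range m, (ω ^ j + (ω ^ j)⁻¹ + (c + c⁻¹)) = (1 + c ^ m) ^ 2 / c ^ m := by
  have hfactor (j : ℕ) :
      ω ^ j + (ω ^ j)⁻¹ + (c + c⁻¹) = (c + ω ^ j) * (c⁻¹ + ω ^ j) / ω ^ j := by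
    have : ω ^ j ≠ 0 := pow_ne_zero j (hω.ne_zero hm.pos.ne')
    field_simp
    ring
  rw [prod_congr rfl fun j _ ↦ hfactor j, prod_div_distrib, prod_mul_distrib,
    hω.prod_add_pow hm.pos, hω.prod_add_pow hm.pos, hω.prod_pow_of_odd hm, hm.neg_one_pow, inv_pow]
  field_simp
  ring

theorem prod_torus_eigenvalues_of_odd (hω : IsPrimitiveRoot ω m) (hζ : IsPrimitiveRoot ζ n)
    (hm : Odd m) (hn : Odd n) :
    ∏ p : Fin m × Fin n,
        (ω ^ (p.1 : ℕ) + (ω ^ (p.1 : ℕ))⁻¹ + (ζ ^ (p.2 : ℕ) + (ζ ^ (p.2 : ℕ))⁻¹)) =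
      4 ^ m.gcd n := by
  calc ∏ p : Fin m × Fin n,
        (ω ^ (p.1 : ℕ) + (ω ^ (p.1 : ℕ))⁻¹ + (ζ ^ (p.2 : ℕ) + (ζ ^ (p.2 : ℕ))⁻¹))
      = ∏ k ∈ range n, ∏ j ∈ range m, (ω ^ j + (ω ^ j)⁻¹ + (ζ ^ k + (ζ ^ k)⁻¹)) := by
        simp only [Fintype.prod_prod_type_right, Finset.prod_range]
    _ = ∏ k ∈ range n, (1 + (ζ ^ k) ^ m) ^ 2 / (ζ ^ k) ^ m :=
        prod_congr rfl fun k _ ↦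
          hω.prod_pow_add_inv_add_add_inv hm (pow_ne_zero k (hζ.ne_zero hn.pos.ne'))
    _ = (∏ k ∈ range n, (1 + (ζ ^ k) ^ m)) ^ 2 / (∏ k ∈ range n, ζ ^ k) ^ m := by
        rw [prod_div_distrib, prod_pow, prod_pow]
    _ = 4 ^ m.gcd n := by
        rw [hζ.prod_one_add_pow_pow hn hm.pos.ne', hζ.prod_pow_of_odd hn, one_pow, div_one,
          ← pow_mul, mul_comm, pow_mul, Nat.gcd_comm]
        norm_num

end IsPrimitiveRoot

theorem SimpleGraph.det_adjMatrix_boxProd_cycleGraph {K : Type*} [Field K] {m n : ℕ}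
    (hm : 3 ≤ m) (hn : 3 ≤ n) {ω ζ : K} (hω : IsPrimitiveRoot ω m) (hζ : IsPrimitiveRoot ζ n)
    [DecidableRel (cycleGraph m □ cycleGraph n).Adj] :
    ((cycleGraph m □ cycleGraph n).adjMatrix K).det =
      ∏ p : Fin m × Fin n,
        (ω ^ (p.1 : ℕ) + (ω ^ (p.1 : ℕ))⁻¹ + (ζ ^ (p.2 : ℕ) + (ζ ^ (p.2 : ℕ))⁻¹)) := by
  refine det_eq_prod_of_mul_eq_diagonal_mul ?_ (kronecker_mul_adjMatrix_boxProd
    (vandermonde_mul_adjMatrix_cycleGraph hm hω.pow_eq_one)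
    (vandermonde_mul_adjMatrix_cycleGraph hn hζ.pow_eq_one))
  rw [det_kronecker]
  exact mul_ne_zero (pow_ne_zero _ hω.det_vandermonde_pow_ne_zero)
    (pow_ne_zero _ hζ.det_vandermonde_pow_ne_zero)

open scoped Classical in
theorem det_adjMatrix_torus (m n : ℕ) (hm : 3 ≤ m) (hn : 3 ≤ n) :
    (((cycleGraph m).boxProd (cycleGraph n)).adjMatrix ℤ).det =
      if Odd m ∧ Odd n then (4 : ℤ) ^ Nat.gcd m n else 0 := by
  have hω := Complex.isPrimitiveRoot_exp m (by omega)
  have hζ := Complex.isPrimitiveRoot_exp n (by omega)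
  apply Int.cast_injective (α := ℂ)
  rw [Int.cast_det, adjMatrix_map _ Int.cast_zero Int.cast_one,
    det_adjMatrix_boxProd_cycleGraph hm hn hω hζ]
  split_ifs with hodd
  · push_cast
    exact hω.prod_torus_eigenvalues_of_odd hζ hodd.1 hodd.2
  · rw [Int.cast_zero]
    rcases not_and_or.mp hodd with hm' | hn'
    · refine prod_eq_zero (mem_univ (⟨m / 2, by omega⟩, ⟨0, by omega⟩)) ?_
      simp [hω.pow_div_two_eq_neg_one (Nat.not_odd_iff_even.mp hm') (by omega)]
    · refine prod_eq_zero (mem_univ (⟨0, by omega⟩, ⟨n / 2, by omega⟩)) ?_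
      simp [hζ.pow_div_two_eq_neg_one (Nat.not_odd_iff_even.mp hn') (by omega)]
end

section
/- Let n > 1 be an integer. Then the determinant of the adjacency matrix of the Möbius ladder M_{2n} equals -3 if n ≡ 2 or n ≡ -2 (mod 6); equals -9 if n ≡ 1 or n ≡ -1 (mod 6); and equals 0 if n ≡ 0 or n ≡ 3 (mod 6). -/
/-!
The adjacency matrix of `M_{2n}` is the circulant matrix on `ZMod (2 * n)` with connection set
`{1, -1, n}`, so the characters `j ↦ ζ ^ (i * j)` of `ZMod (2 * n)` (`ζ` a primitive `2n`-th root
of unity) diagonalise it and its determinant is `∏_{z ^ (2n) = 1} (z + z⁻¹ + z ^ n)`.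
If `z ^ n = c = ±1` then `z + z⁻¹ + c = z⁻¹ (z - c ω) (z - c ω²)` for a primitive cube root of
unity `ω`, and `∏_{z ^ n = c} (x - z) = x ^ n - c` collapses the product to
`-(ω ^ n - 1) (ω ^ (2n) - 1) ((-ω) ^ n + 1) ((-ω²) ^ n + 1)`, which depends only on `n mod 6`.
-/

open SimpleGraph

/-- The Möbius ladder on `2 * n` vertices: vertices `i` and `j` in `ZMod (2 * n)` are
adjacent if and only if `i - j ≡ 1, -1` or `n (mod 2 * n)`. -/
def mobiusLadder (n : ℕ) : SimpleGraph (ZMod (2 * n)) :=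
  SimpleGraph.fromRel (fun i j => i - j = 1 ∨ i - j = (n : ZMod (2 * n)))

open Finset Matrix

namespace Matrix

variable {G R : Type*} [CommRing G] [Fintype G] [DecidableEq G] [CommRing R]

theorem of_addChar_mul_mul_circulant (ψ : AddChar G R) (v : G → R) :
    of (fun j k => ψ (j * k)) * circulant v =
      diagonal (fun j => ∑ s, v s * ψ (j * s)) * of (fun j k => ψ (j * k)) := by
  ext j i
  rw [mul_apply, diagonal_mul, of_apply, sum_mul, ← Equiv.sum_comp (Equiv.addRight i)]
  refine sum_congr rfl fun s _ => ?_
  simp only [of_apply, circulant_apply, Equiv.coe_addRight, add_sub_cancel_right, mul_add,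
    AddChar.map_add_eq_mul]
  ring

theorem det_of_addChar_mul_ne_zero [IsDomain R] {ψ : AddChar G R} (hψ : ψ.IsPrimitive)
    (hG : (Fintype.card G : R) ≠ 0) : (of fun j k => ψ (j * k)).det ≠ 0 := by
  have hinv : (of fun j k => ψ (j * k)) * (of fun j k => ψ (-(j * k))) =
      (Fintype.card G : R) • (1 : Matrix G G R) := by
    ext j i
    rw [mul_apply, smul_apply, one_apply, smul_eq_mul, mul_boole]
    simp only [of_apply, ← AddChar.map_add_eq_mul]
    simp_rw [show ∀ k, j * k + -(k * i) = k * (j - i) from fun k => by ring]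
    simp only [AddChar.sum_mulShift _ hψ, sub_eq_zero, Nat.cast_ite, Nat.cast_zero]
  intro h
  have := congrArg det hinv
  rw [det_mul, h, zero_mul, det_smul, det_one, mul_one] at this
  exact pow_ne_zero _ hG this.symm

theorem det_circulant_eq_prod [IsDomain R] {ψ : AddChar G R} (hψ : ψ.IsPrimitive)
    (hG : (Fintype.card G : R) ≠ 0) (v : G → R) :
    (circulant v).det = ∏ j, ∑ s, v s * ψ (j * s) := by
  have h := congrArg det (of_addChar_mul_mul_circulant ψ v)
  rw [det_mul, det_mul, det_diagonal, mul_comm] at h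
  exact mul_right_cancel₀ (det_of_addChar_mul_ne_zero hψ hG) h

end Matrix

theorem ZMod.natCast_ne_zero_of_lt {k m : ℕ} (hk : k ≠ 0) (hkm : k < m) : (k : ZMod m) ≠ 0 :=
  fun h => hk (Nat.eq_zero_of_dvd_of_lt ((ZMod.natCast_eq_zero_iff k m).1 h) hkm)

theorem ZMod.prod_univ_eq_prod_range {M : Type*} [CommMonoid M] (f : ℕ → M) (N : ℕ)
    [NeZero N] : ∏ j : ZMod N, f j.val = ∏ i ∈ range N, f i := by
  obtain ⟨k, rfl⟩ := Nat.exists_eq_succ_of_ne_zero (NeZero.ne N)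
  -- `ZMod (k + 1)` is `Fin (k + 1)` by definition, with `ZMod.val` the coercion to `ℕ`.
  exact Fin.prod_univ_eq_prod_range f (k + 1)

theorem Finset.prod_range_two_mul {M : Type*} [CommMonoid M] (f : ℕ → M) (n : ℕ) :
    ∏ i ∈ range (2 * n), f i = ∏ m ∈ range n, (f (2 * m) * f (2 * m + 1)) := by
  induction n with
  | zero => simp
  | succ n ih => rw [mul_add_one, prod_range_succ, prod_range_succ, prod_range_succ, ih, mul_assoc]

namespace IsPrimitiveRoot

variable {K : Type*} [Field K] {n : ℕ}

theorem prod_sub_pow_mul {ξ : K} (hξ : IsPrimitiveRoot ξ n) (hn : 0 < n) (x α : K) :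
    ∏ m ∈ range n, (x - ξ ^ m * α) = x ^ n - α ^ n := by
  simpa [Polynomial.eval_prod] using
    congrArg (Polynomial.eval x) (X_pow_sub_C_eq_prod hξ hn rfl).symm

theorem mul_prod_add_inv_add_pow {ξ : K} (hξ : IsPrimitiveRoot ξ n) (hn : 0 < n) {α r s : K}
    (hα : α ≠ 0) (hrs : r * s = 1) (hr_add_s : r + s = -α ^ n) :
    -(-1) ^ n * α ^ n * ∏ m ∈ range n, (ξ ^ m * α + (ξ ^ m * α)⁻¹ + (ξ ^ m * α) ^ n) =
      (r ^ n - α ^ n) * (s ^ n - α ^ n) := by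
  have hz : ∀ m, ξ ^ m * α ≠ 0 := fun m => mul_ne_zero (pow_ne_zero _ (hξ.ne_zero hn.ne')) hα
  have hzn : ∀ m, (ξ ^ m * α) ^ n = α ^ n := fun m => by
    rw [mul_pow, ← pow_mul, mul_comm m n, pow_mul, hξ.pow_eq_one, one_pow, one_mul]
  have hfactor : ∀ z : K, z ≠ 0 → z + z⁻¹ + α ^ n = z⁻¹ * ((r - z) * (s - z)) := fun z hz => by
    field_simp
    linear_combination z * hr_add_s - hrs
  have hprod : ∏ m ∈ range n, ξ ^ m * α = -(-1) ^ n * α ^ n := by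
    have h := hξ.prod_sub_pow_mul hn 0 α
    simp only [zero_sub, prod_neg, card_range, zero_pow hn.ne'] at h
    have hsign : (-1 : K) ^ n * (-1) ^ n = 1 := by rw [← mul_pow]; norm_num
    linear_combination (-1) ^ n * h - (∏ m ∈ range n, ξ ^ m * α) * hsign
  rw [prod_congr rfl fun m _ => by rw [hzn, hfactor _ (hz m)], prod_mul_distrib,
    prod_mul_distrib, prod_inv_distrib, hξ.prod_sub_pow_mul hn, hξ.prod_sub_pow_mul hn, ← hprod,
    ← mul_assoc, mul_inv_cancel₀ (prod_ne_zero_iff.2 fun m _ => hz m), one_mul]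

theorem neg_prod_range_two_mul_add_inv_add_pow {ζ ω : K} (hζ : IsPrimitiveRoot ζ (2 * n))
    (hn : 0 < n) (hω : ω ^ 2 + ω + 1 = 0) :
    -∏ i ∈ range (2 * n), (ζ ^ i + (ζ ^ i)⁻¹ + (ζ ^ i) ^ n) =
      (ω ^ n - 1) * ((ω ^ 2) ^ n - 1) * (((-ω) ^ n + 1) * ((-ω ^ 2) ^ n + 1)) := by
  have hξ : IsPrimitiveRoot (ζ ^ 2) n := hζ.pow (by omega) rfl
  have hζn : ζ ^ n = -1 := (hζ.pow (by omega) (mul_comm 2 n)).eq_neg_one_of_two_right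
  have hω3 : ω * ω ^ 2 = 1 := by linear_combination (ω - 1) * hω
  have heven := hξ.mul_prod_add_inv_add_pow hn one_ne_zero hω3 (by linear_combination hω)
  have hodd := hξ.mul_prod_add_inv_add_pow hn (hζ.ne_zero (by omega)) (r := -ω) (s := -ω ^ 2)
    (by linear_combination hω3) (by rw [hζn]; linear_combination -hω)
  simp only [mul_one, one_pow, hζn] at heven hodd
  have hsign : (-1 : K) ^ n * (-1) ^ n = 1 := by rw [← mul_pow]; norm_num
  have hpow_odd : ∀ m, ζ ^ (2 * m + 1) = (ζ ^ 2) ^ m * ζ := fun m => by rw [pow_succ, pow_mul]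
  rw [prod_range_two_mul, prod_mul_distrib]
  simp only [hpow_odd, pow_mul]
  set Pe := ∏ m ∈ range n, ((ζ ^ 2) ^ m + ((ζ ^ 2) ^ m)⁻¹ + ((ζ ^ 2) ^ m) ^ n)
  set Po := ∏ m ∈ range n, ((ζ ^ 2) ^ m * ζ + ((ζ ^ 2) ^ m * ζ)⁻¹ + ((ζ ^ 2) ^ m * ζ) ^ n)
  linear_combination ((-ω) ^ n + 1) * ((-ω ^ 2) ^ n + 1) * heven - (-1) ^ n * Pe * hodd +
    Pe * Po * hsign

end IsPrimitiveRoot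

theorem neg_prod_pow_cubeRoot_eq_ite {R : Type*} [CommRing R] {ω : R} (hω : ω ^ 2 + ω + 1 = 0)
    (n : ℕ) :
    -((ω ^ n - 1) * ((ω ^ 2) ^ n - 1) * (((-ω) ^ n + 1) * ((-ω ^ 2) ^ n + 1))) =
      ((if n % 6 = 2 ∨ n % 6 = 4 then -3 else if n % 6 = 1 ∨ n % 6 = 5 then -9 else 0 : ℤ) :
        R) := by
  have hω3 : ω ^ 3 = 1 := by linear_combination (ω - 1) * hω
  have h6 : ω ^ 6 = 1 := by linear_combination (ω ^ 3 + 1) * hω3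
  have h12 : ω ^ 12 = 1 := by linear_combination (ω ^ 6 + 1) * h6
  rw [pow_eq_pow_mod n h6, pow_eq_pow_mod n (by linear_combination h12 : (ω ^ 2) ^ 6 = 1),
    pow_eq_pow_mod n (by linear_combination h6 : (-ω) ^ 6 = 1),
    pow_eq_pow_mod n (by linear_combination h12 : (-ω ^ 2) ^ 6 = 1)]
  have hk := Nat.mod_lt n (by norm_num : 6 > 0)
  generalize n % 6 = k at hk ⊢
  interval_cases k <;> norm_num <;> grind

def mobiusLadderConnectionSet (n : ℕ) : Finset (ZMod (2 * n)) := {1, -1, (n : ZMod (2 * n))}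

section MobiusLadder

variable {n : ℕ}

theorem mobiusLadder_adj_iff (hn : 0 < n) (i j : ZMod (2 * n)) :
    (mobiusLadder n).Adj i j ↔ i - j ∈ mobiusLadderConnectionSet n := by
  have h1 : (1 : ZMod (2 * n)) ≠ 0 := by
    exact_mod_cast ZMod.natCast_ne_zero_of_lt one_ne_zero (by omega : 1 < 2 * n)
  have hn0 : (n : ZMod (2 * n)) ≠ 0 := ZMod.natCast_ne_zero_of_lt hn.ne' (by omega)
  have hneg : -(n : ZMod (2 * n)) = n := by
    have h2n : ((2 * n : ℕ) : ZMod (2 * n)) = 0 := ZMod.natCast_self _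
    push_cast at h2n
    linear_combination -h2n
  simp only [mobiusLadder, mobiusLadderConnectionSet, fromRel_adj, mem_insert, mem_singleton,
    ne_eq, ← sub_eq_zero (a := i), ← neg_sub i j, neg_eq_iff_eq_neg, hneg]
  generalize i - j = d
  constructor
  · rintro ⟨-, (h | h) | h | h⟩ <;> simp [h]
  · rintro (rfl | rfl | rfl) <;> simp [h1, hn0]

theorem adjMatrix_mobiusLadder_eq_circulant {R : Type*} [Zero R] [One R] (hn : 0 < n)
    [DecidableRel (mobiusLadder n).Adj] :
    (mobiusLadder n).adjMatrix R =
      circulant fun d => if d ∈ mobiusLadderConnectionSet n then 1 else 0 := by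
  ext i j
  simp only [adjMatrix_apply, circulant_apply, mobiusLadder_adj_iff hn]

theorem sum_mobiusLadderConnectionSet {M : Type*} [AddCommMonoid M] (hn : 1 < n)
    (f : ZMod (2 * n) → M) : ∑ s ∈ mobiusLadderConnectionSet n, f s = f 1 + f (-1) + f n := by
  have hne : ∀ k : ℕ, k ≠ 0 → k < 2 * n → (k : ZMod (2 * n)) ≠ 0 :=
    fun _ => ZMod.natCast_ne_zero_of_lt
  have h1 : (1 : ZMod (2 * n)) ∉ ({-1, (n : ZMod (2 * n))} : Finset _) := by
    simp only [mem_insert, mem_singleton, not_or]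
    exact ⟨fun h => hne 2 (by omega) (by omega) (by push_cast; linear_combination h),
      fun h => hne (n - 1) (by omega) (by omega)
        (by rw [Nat.cast_sub hn.le]; push_cast; linear_combination -h)⟩
  have h2 : (-1 : ZMod (2 * n)) ≠ n :=
    fun h => hne (n + 1) (by omega) (by omega) (by push_cast; linear_combination -h)
  rw [mobiusLadderConnectionSet, sum_insert h1, sum_pair h2, add_assoc]

theorem det_adjMatrix_mobiusLadder_eq_prod [NeZero (2 * n)] {K : Type*} [Field K] (hn : 1 < n)
    [DecidableRel (mobiusLadder n).Adj] {ζ : K} (hζ : IsPrimitiveRoot ζ (2 * n)) :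
    ((mobiusLadder n).adjMatrix K).det =
      ∏ i ∈ range (2 * n), (ζ ^ i + (ζ ^ i)⁻¹ + (ζ ^ i) ^ n) := by
  have hcard : (Fintype.card (ZMod (2 * n)) : K) ≠ 0 := by
    rw [ZMod.card]
    exact hζ.neZero'.out
  have hψ : ∀ (ψ : AddChar (ZMod (2 * n)) K) j,
      ∑ s ∈ mobiusLadderConnectionSet n, ψ (j * s) = ψ j + (ψ j)⁻¹ + ψ j ^ n := by
    intro ψ j
    rw [sum_mobiusLadderConnectionSet hn, mul_one, mul_neg_one, AddChar.map_neg_eq_inv,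
      mul_comm j, ← nsmul_eq_mul, AddChar.map_nsmul_eq_pow]
  rw [adjMatrix_mobiusLadder_eq_circulant (by omega),
    det_circulant_eq_prod (AddChar.zmodChar_primitive_of_primitive_root _ hζ) hcard]
  simp only [boole_mul, sum_ite_mem, univ_inter, hψ]
  simp only [AddChar.zmodChar_apply]
  exact ZMod.prod_univ_eq_prod_range (fun i => ζ ^ i + (ζ ^ i)⁻¹ + (ζ ^ i) ^ n) (2 * n)

end MobiusLadder

open scoped Classical in
theorem det_adjMatrix_mobiusLadder (n : ℕ) (hn : 1 < n) :
    haveI : NeZero (2 * n) := ⟨by omega⟩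
    ((mobiusLadder n).adjMatrix ℤ).det =
      if n % 6 = 2 ∨ n % 6 = 4 then -3
      else if n % 6 = 1 ∨ n % 6 = 5 then -9
      else 0 := by
  have : NeZero (2 * n) := ⟨by omega⟩
  set ω := Complex.exp (2 * Real.pi * Complex.I / 3)
  have hω : ω ^ 2 + ω + 1 = 0 := by
    have h := (Complex.isPrimitiveRoot_exp 3 (by norm_num)).geom_sum_eq_zero (by norm_num)
    simp only [sum_range_succ, sum_range_zero] at h
    linear_combination h
  have hζ := Complex.isPrimitiveRoot_exp (2 * n) (by omega)
  have hcast : ((mobiusLadder n).adjMatrix ℤ).map (Int.cast : ℤ → ℂ) =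
      (mobiusLadder n).adjMatrix ℂ := by
    ext i j
    simp [adjMatrix_apply]
  apply Int.cast_injective (α := ℂ)
  rw [Int.cast_det, hcast, det_adjMatrix_mobiusLadder_eq_prod hn hζ,
    ← neg_prod_pow_cubeRoot_eq_ite hω, ← hζ.neg_prod_range_two_mul_add_inv_add_pow (by omega) hω,
    neg_neg]
end

section
/- Let n be a positive integer and let a be an integer with gcd(a,n) = 1. Then for every real number x, sin(n x) = 2^(n-1) · (-1)^((a-1)(n-1)/2) · ∏_{j=0}^{n-1} sin(x + a j π / n). (Since gcd(a,n) = 1, a and n are not both even, so (a-1)(n-1) is even and the exponent is an integer.) -/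
/-!
Write `2i sin w = e^{iw} (1 - e^{-2iw})`. For `w = x + jθ` with `θ = aπ/n`, the number
`ζ = e^{-2iθ}` is a primitive `n`-th root of unity because `gcd(a, n) = 1`, so
`∏ⱼ (1 - ζ^j t) = 1 - t^n` collapses the product of the `n` factors to `2i sin(nx)`, up to the
phase `∏ⱼ e^{ijθ} = e^{iπa(n-1)/2}`. Comparing this phase with `(2i)^{n-1} = 2^{n-1} e^{iπ(n-1)/2}`
gives the sign `(-1)^{(a-1)(n-1)/2}`.
-/

open Real Finset

theorem IsPrimitiveRoot.prod_one_sub_pow_mul {R : Type*} [CommRing R] [IsDomain R] {ζ : R} {n : ℕ}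
    (hζ : IsPrimitiveRoot ζ n) (hn : 0 < n) (t : R) :
    ∏ j ∈ range n, (1 - ζ ^ j * t) = 1 - t ^ n := by
  simpa [Polynomial.eval_prod] using
    congrArg (Polynomial.eval 1) (X_pow_sub_C_eq_prod hζ hn rfl).symm

theorem Int.two_dvd_sub_one_mul_sub_one {a b : ℤ} (h : Int.gcd a b = 1) :
    2 ∣ (a - 1) * (b - 1) := by
  rw [← even_iff_two_dvd, Int.even_mul, Int.even_sub_one, Int.even_sub_one, ← not_and_or]
  rintro ⟨⟨k, rfl⟩, ⟨l, rfl⟩⟩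
  have : (2 : ℤ) ∣ Int.gcd (k + k) (l + l) := Int.dvd_coe_gcd ⟨k, by ring⟩ ⟨l, by ring⟩
  rw [h] at this
  norm_num at this

namespace Complex

theorem two_mul_I_mul_sin (z : ℂ) : 2 * I * sin z = exp (z * I) * (1 - exp (-2 * z * I)) := by
  rw [mul_sub, mul_one, ← exp_add, show z * I + -2 * z * I = -z * I by ring]
  linear_combination I * two_sin z + (exp (-z * I) - exp (z * I)) * I_sq

theorem prod_two_mul_I_mul_sin_add {n : ℕ} (hn : 0 < n) {θ : ℂ}
    (hθ : IsPrimitiveRoot (exp (-2 * θ * I)) n) (z : ℂ) :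
    ∏ j ∈ range n, (2 * I * sin (z + j * θ)) =
      (∏ j ∈ range n, exp (j * θ * I)) * (2 * I * sin (n * z)) := by
  have hfactor : ∀ j : ℕ, 2 * I * sin (z + j * θ) =
      exp (z * I) * exp (j * θ * I) * (1 - exp (-2 * θ * I) ^ j * exp (-2 * z * I)) := by
    intro j
    rw [two_mul_I_mul_sin, ← exp_nat_mul, ← exp_add, ← exp_add]
    congr 3 <;> ring
  simp_rw [hfactor, prod_mul_distrib, hθ.prod_one_sub_pow_mul hn, prod_const, card_range,
    two_mul_I_mul_sin, ← exp_nat_mul]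
  rw [show (n : ℂ) * (z * I) = n * z * I by ring,
    show (n : ℂ) * (-2 * z * I) = -2 * (n * z) * I by ring]
  ring

theorem isPrimitiveRoot_exp_int_mul {n : ℕ} (hn : n ≠ 0) {a : ℤ} (ha : a.gcd n = 1) :
    IsPrimitiveRoot (exp (2 * π * I * a / n)) n := by
  have h := (isPrimitiveRoot_exp n hn).zpow_of_gcd_eq_one a ha
  rwa [← exp_int_mul, show (a : ℂ) * (2 * π * I / n) = 2 * π * I * a / n by ring] at h

theorem two_mul_I_pow_sub_one {n : ℕ} (hn : 0 < n) {a e : ℤ} (he : 2 * e = (a - 1) * (n - 1)) :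
    (2 * I) ^ (n - 1) = 2 ^ (n - 1) * (-1) ^ e * ∏ j ∈ range n, exp (j * (a * π / n) * I) := by
  have hsum := congrArg (Nat.cast : ℕ → ℂ) (sum_range_id_mul_two n)
  have hI : I ^ (n - 1) = exp ((n - 1 : ℕ) * (π / 2 * I)) := by
    rw [exp_nat_mul, exp_mul_I]
    simp
  rw [mul_pow, hI, ← exp_sum, ← exp_pi_mul_I, ← exp_int_mul, mul_assoc, ← exp_add]
  congr 1
  rw [exp_eq_exp_iff_exists_int]
  refine ⟨-e, ?_⟩
  have hn0 : (n : ℂ) ≠ 0 := Nat.cast_ne_zero.mpr hn.ne'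
  have hec : 2 * (e : ℂ) = (a - 1) * (n - 1) := by exact_mod_cast he
  rw [← sum_mul, ← sum_mul]
  push_cast [Nat.cast_sub hn] at hsum ⊢
  field_simp
  linear_combination -(a : ℂ) * hsum + (n : ℂ) * hec

theorem sin_nat_mul_eq_prod_sin {n : ℕ} (hn : 0 < n) {a : ℤ} (ha : a.gcd n = 1) {e : ℤ}
    (he : 2 * e = (a - 1) * (n - 1)) (z : ℂ) :
    sin (n * z) = 2 ^ (n - 1) * (-1) ^ e * ∏ j ∈ range n, sin (z + a * j * π / n) := by
  set θ : ℂ := a * π / n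
  have hθ : IsPrimitiveRoot (exp (-2 * θ * I)) n := by
    convert isPrimitiveRoot_exp_int_mul hn.ne' (a := -a) (by rwa [Int.neg_gcd]) using 2
    push_cast
    ring
  have key := prod_two_mul_I_mul_sin_add hn hθ z
  rw [prod_mul_distrib, prod_const, card_range, ← pow_sub_one_mul hn.ne',
    two_mul_I_pow_sub_one hn he] at key
  have hshift : ∀ j : ℕ, z + a * j * π / n = z + j * θ := fun j => by ring
  simp_rw [hshift]
  have hP : (∏ j ∈ range n, exp (j * θ * I)) * (2 * I) ≠ 0 :=
    mul_ne_zero (prod_ne_zero_iff.mpr fun j _ => exp_ne_zero _) (by simp)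
  apply mul_left_cancel₀ hP
  linear_combination -key

end Complex

theorem sin_mul_eq_prod_sin (n : ℕ) (hn : 0 < n) (a : ℤ) (ha : Int.gcd a n = 1) (x : ℝ) :
    Real.sin (n * x) =
      2 ^ (n - 1) * (-1 : ℝ) ^ ((a - 1) * ((n : ℤ) - 1) / 2) *
        ∏ j ∈ Finset.range n, Real.sin (x + a * j * π / n) := by
  obtain ⟨e, he⟩ := Int.two_dvd_sub_one_mul_sub_one ha
  rw [he, Int.mul_ediv_cancel_left _ two_ne_zero]
  apply Complex.ofReal_injective
  push_cast
  exact Complex.sin_nat_mul_eq_prod_sin hn ha he.symm x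
end

section
/- Let n be a positive integer and let a be an integer with gcd(a,n) = 1. Then ∏_{j=1}^{n-1} sin(a j π / n) = (-1)^((a-1)(n-1)/2) · n / 2^(n-1). (Since gcd(a,n) = 1, (a-1)(n-1) is even and the exponent is an integer; for n = 1 the empty product equals 1.) -/
/-!
Writing `a j = n ⌊a j / n⌋ + r_j`, each factor is
`sin (a j π / n) = (-1) ^ ⌊a j / n⌋ sin (r_j π / n)`, and since `a` is a unit mod `n`, `j ↦ r_j`
permutes `{1, …, n - 1}`. So the sines multiply to the classical
`∏ sin (j π / n) = n / 2 ^ (n - 1)` (the modulus of `∏ (1 - ζ ^ j) = n` for a primitive `n`-th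
root of unity `ζ`), and the sign exponent is found from
`n ∑ ⌊a j / n⌋ = ∑ (a j - r_j) = (a - 1) ∑ j = (a - 1) n (n - 1) / 2`.
-/

open Real Finset

lemma Finset.prod_zpow_eq_zpow_sum₀ {ι G₀ : Type*} [CommGroupWithZero G₀] {a : G₀} (ha : a ≠ 0)
    (s : Finset ι) (f : ι → ℤ) : ∏ i ∈ s, a ^ f i = a ^ ∑ i ∈ s, f i := by
  classical
  induction s using Finset.induction_on with
  | empty => simp
  | insert i s hi ih => rw [prod_insert hi, sum_insert hi, ih, zpow_add₀ ha]

lemma Finset.prod_Icc_one_eq_prod_range {M : Type*} [CommMonoid M] (f : ℕ → M) (m : ℕ) :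
    ∏ j ∈ Icc 1 m, f j = ∏ k ∈ range m, f (k + 1) := by
  rw [← Ico_add_one_right_eq_Icc, prod_Ico_eq_prod_range]
  simp [add_comm]

lemma two_mul_sum_Icc_one_natCast (m : ℕ) : 2 * ∑ j ∈ Icc 1 m, (j : ℤ) = (m + 1) * m := by
  induction m with
  | zero => simp
  | succ m ih =>
    rw [sum_Icc_succ_top (by omega), mul_add, ih]
    push_cast
    ring

lemma sin_int_mul_pi_div (b : ℤ) {n : ℕ} (hn : n ≠ 0) :
    sin (b * π / n) = (-1) ^ (b / n) * sin ((b % n).toNat * π / n) := by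
  have hrem : ((b % n).toNat : ℝ) = ((b % n : ℤ) : ℝ) := by
    exact_mod_cast Int.toNat_of_nonneg (Int.emod_nonneg b (by exact_mod_cast hn))
  have hb : (b : ℝ) = (b % n : ℤ) + n * (b / n : ℤ) := by
    exact_mod_cast (Int.emod_add_mul_ediv b n).symm
  rw [hrem, ← sin_add_int_mul_pi]
  congr 1
  field_simp
  exact hb

lemma prod_sin_nat_mul_pi_div {n : ℕ} (hn : 0 < n) :
    ∏ j ∈ Icc 1 (n - 1), sin (j * π / n) = n / 2 ^ (n - 1) := by
  obtain ⟨m, rfl⟩ := Nat.exists_eq_add_one_of_ne_zero hn.ne'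
  set μ := Complex.exp (2 * π * Complex.I / (m + 1 : ℕ))
  have hnorm : ∀ k ∈ range m, ‖1 - μ ^ (k + 1)‖ = 2 * sin ((k + 1 : ℕ) * π / (m + 1 : ℕ)) := by
    intro k hk
    have hk : k + 1 ≤ m + 1 := by rw [mem_range] at hk; omega
    have hpow :
        μ ^ (k + 1) = Complex.exp (Complex.I * ↑(2 * ((k + 1 : ℕ) * π / (m + 1 : ℕ)))) := by
      rw [← Complex.exp_nat_mul]
      push_cast
      ring_nf
    rw [norm_sub_rev, hpow, Complex.norm_exp_I_mul_ofReal_sub_one,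
      mul_div_cancel_left₀ _ two_ne_zero, norm_mul, Real.norm_two, norm_of_nonneg]
    apply sin_nonneg_of_nonneg_of_le_pi (by positivity)
    rw [div_le_iff₀ (by positivity), mul_comm π]
    gcongr
  have h := congrArg norm
    (Complex.isPrimitiveRoot_exp (m + 1) m.succ_ne_zero).prod_one_sub_pow_eq_order
  rw [norm_prod, prod_congr rfl hnorm, prod_mul_distrib, prod_const, card_range] at h
  rw [Nat.add_sub_cancel, prod_Icc_one_eq_prod_range, eq_div_iff (by positivity), mul_comm, h]
  norm_cast

lemma bijOn_toNat_mul_emod {n : ℕ} {a : ℤ} (ha : IsCoprime a n) :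
    Set.BijOn (fun j : ℕ ↦ (a * j % n).toNat) (Icc 1 (n - 1) : Set ℕ) (Icc 1 (n - 1)) := by
  rcases Nat.eq_zero_or_pos n with rfl | hn
  · simp
  have hn' : (0 : ℤ) < n := by exact_mod_cast hn
  have hrange : ∀ j : ℕ, 0 ≤ a * j % n ∧ a * j % n < n := fun j ↦
    ⟨Int.emod_nonneg _ hn'.ne', Int.emod_lt_of_pos _ hn'⟩
  refine (Set.Finite.injOn_iff_bijOn_of_mapsTo (finite_toSet _) ?_).mp ?_
  · intro j hj
    simp only [coe_Icc, Set.mem_Icc] at hj ⊢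
    have hndvd : ¬ (n : ℤ) ∣ a * j := fun hdvd ↦ by
      have := Int.natCast_dvd_natCast.mp (ha.symm.dvd_of_dvd_mul_left hdvd)
      have := Nat.le_of_dvd (by omega) this
      omega
    have hne : a * j % n ≠ 0 := fun h ↦ hndvd (Int.dvd_of_emod_eq_zero h)
    have := hrange j
    omega
  · intro j hj k hk hjk
    simp only [coe_Icc, Set.mem_Icc] at hj hk
    have hmod : a * j % n = a * k % n := by
      have := hrange j; have := hrange k
      simp only at hjk
      omega
    have hdvd : (n : ℤ) ∣ j - k := ha.symm.dvd_of_dvd_mul_left <| by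
      rw [mul_sub]; exact Int.ModEq.dvd hmod.symm
    have := Int.eq_zero_of_abs_lt_dvd hdvd (by rw [abs_lt]; omega)
    omega

lemma prod_Icc_toNat_mul_emod {M : Type*} [CommMonoid M] {n : ℕ} {a : ℤ} (ha : IsCoprime a n)
    (f : ℕ → M) : ∏ j ∈ Icc 1 (n - 1), f (a * j % n).toNat = ∏ j ∈ Icc 1 (n - 1), f j :=
  let hbij := bijOn_toNat_mul_emod ha
  prod_nbij _ hbij.mapsTo hbij.injOn hbij.surjOn fun _ _ ↦ rfl

lemma sum_Icc_mul_ediv_eq {n : ℕ} (hn : 0 < n) {a : ℤ} (ha : IsCoprime a n) :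
    ∑ j ∈ Icc 1 (n - 1), a * j / n = (a - 1) * (n - 1) / 2 := by
  have hrem : ∑ j ∈ Icc 1 (n - 1), a * j % n = ∑ j ∈ Icc 1 (n - 1), (j : ℤ) :=
    have hbij := bijOn_toNat_mul_emod ha
    sum_nbij _ hbij.mapsTo hbij.injOn hbij.surjOn fun j _ ↦
      (Int.toNat_of_nonneg (Int.emod_nonneg _ (by omega))).symm
  have hgauss : 2 * ∑ j ∈ Icc 1 (n - 1), (j : ℤ) = n * (n - 1) := by
    obtain ⟨m, rfl⟩ := Nat.exists_eq_add_one_of_ne_zero hn.ne'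
    rw [Nat.add_sub_cancel, two_mul_sum_Icc_one_natCast]
    push_cast
    ring
  have hdouble : 2 * ∑ j ∈ Icc 1 (n - 1), a * j / n = (a - 1) * (n - 1) := by
    refine mul_left_cancel₀ (by omega : (n : ℤ) ≠ 0) ?_
    calc (n : ℤ) * (2 * ∑ j ∈ Icc 1 (n - 1), a * j / n)
        = 2 * ∑ j ∈ Icc 1 (n - 1), (a * j - a * j % n) := by
          rw [mul_left_comm, mul_sum]
          congr 1
          exact sum_congr rfl fun j _ ↦ by linarith [Int.emod_add_mul_ediv (a * j) n]
      _ = (a - 1) * (2 * ∑ j ∈ Icc 1 (n - 1), (j : ℤ)) := by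
          rw [sum_sub_distrib, hrem, ← mul_sum]; ring
      _ = n * ((a - 1) * (n - 1)) := by rw [hgauss]; ring
  rw [← hdouble, Int.mul_ediv_cancel_left _ two_ne_zero]

theorem prod_sin_eq (n : ℕ) (hn : 0 < n) (a : ℤ) (ha : Int.gcd a n = 1) :
    ∏ j ∈ Finset.Icc 1 (n - 1), Real.sin (a * j * π / n) =
      (-1 : ℝ) ^ ((a - 1) * ((n : ℤ) - 1) / 2) * n / 2 ^ (n - 1) := by
  have hcop : IsCoprime a n := Int.isCoprime_iff_gcd_eq_one.mpr ha
  have hsin : ∀ j : ℕ,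
      sin (a * j * π / n) = (-1) ^ (a * j / n) * sin ((a * j % n).toNat * π / n) :=
    fun j ↦ mod_cast sin_int_mul_pi_div (a * j) hn.ne'
  rw [prod_congr rfl fun j _ ↦ hsin j, prod_mul_distrib, prod_zpow_eq_zpow_sum₀ (by norm_num),
    sum_Icc_mul_ediv_eq hn hcop, prod_Icc_toNat_mul_emod hcop fun k ↦ sin (k * π / n),
    prod_sin_nat_mul_pi_div hn, mul_div_assoc]
end

section
/- Let n ≥ 3 be an integer. Then the determinant of the adjacency matrix of the cycle graph C_n on n vertices equals 2 if n is odd; equals -4 if n ≡ 2 (mod 4); and equals 0 if n ≡ 0 (mod 4). -/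
/-!
Let `P` be the permutation matrix of the cyclic shift, so that `A(Cₙ) = P + Pᵀ = P + P⁻¹` and
`P * A(Cₙ) = P² + 1 = (i + P)(-i + P)` over any ring containing a square root `i` of `-1`.
In the Leibniz expansion of `det (a + b P)` only the identity and the `n`-cycle `P⁻¹` give nonzero
terms, so `det (a + b P) = aⁿ - (-b)ⁿ`. Hence `det A(Cₙ) = iⁿ + (-i)ⁿ - 2 (-1)ⁿ`, which over `ℂ`
is `2 cos (n π / 2) - 2 (-1)ⁿ`.
-/

open SimpleGraph Matrix Equiv Finset

namespace Equiv.Perm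

variable {α : Type*} [Finite α]

theorem IsCycle.eq_one_or_eq_of_forall_eq_or_eq {c τ : Perm α} (hc : c.IsCycle)
    (hc_ne : ∀ x, c x ≠ x) (h : ∀ x, τ x = x ∨ τ x = c x) : τ = 1 ∨ τ = c := by
  by_cases hτ : ∀ x, τ x = x
  · exact .inl (Equiv.ext hτ)
  push Not at hτ
  obtain ⟨x₀, hx₀⟩ := hτ
  have h_orbit : ∀ k : ℕ, τ ((c ^ k) x₀) = c ((c ^ k) x₀) := by
    intro k
    induction k with
    | zero => exact (h x₀).resolve_left hx₀
    | succ k ih =>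
      rw [pow_succ', Perm.mul_apply]
      refine (h _).resolve_left fun hfix => hc_ne ((c ^ k) x₀) (τ.injective ?_)
      rw [hfix, ih]
  refine .inr (Equiv.ext fun y => ?_)
  obtain ⟨k, rfl⟩ := hc.exists_pow_eq (hc_ne x₀) (hc_ne y)
  exact h_orbit k

end Equiv.Perm

namespace Matrix

variable {R : Type*} [CommRing R]

theorem det_smul_one_add_smul_permMatrix {α : Type*} [Fintype α] [DecidableEq α] {c : Perm α} (hc : c.IsCycle) (hc_ne : ∀ x, c x ≠ x)
    (a b : R) :
    (a • 1 + b • c.permMatrix R).det = a ^ Fintype.card α + Perm.sign c • b ^ Fintype.card α := by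
  set M := a • 1 + b • c.permMatrix R
  have hM : ∀ i j, M i j = (if i = j then a else 0) + (if c i = j then b else 0) := by
    intro i j
    simp [M, one_apply, PEquiv.toMatrix_apply, Equiv.toPEquiv_apply]
  have hc_inv_ne : ∀ x, c⁻¹ x ≠ x := fun x h => hc_ne x (Perm.inv_eq_iff_eq.mp h).symm
  have h_vanish : ∀ τ ∈ univ, τ ∉ ({1, c⁻¹} : Finset (Perm α)) →
      Perm.sign τ • ∏ i, M (τ i) i = 0 := by
    intro τ _ hτ
    suffices ∃ i, M (τ i) i = 0 by
      obtain ⟨i, hi⟩ := this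
      rw [prod_eq_zero (f := fun j => M (τ j) j) (mem_univ i) hi, smul_zero]
    by_contra! h_ne
    have h_support : ∀ i, τ i = i ∨ τ i = c⁻¹ i := by
      intro i
      by_contra! hne
      apply h_ne i
      rw [hM, if_neg hne.1, if_neg (fun h => hne.2 (Perm.eq_inv_iff_eq.mpr h)), add_zero]
    rcases hc.inv.eq_one_or_eq_of_forall_eq_or_eq hc_inv_ne h_support with rfl | rfl <;> simp at hτ
  obtain ⟨x₀, -⟩ := hc
  have h_one_ne : (1 : Perm α) ≠ c⁻¹ := fun h => hc_inv_ne x₀ (by rw [← h, Perm.one_apply])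
  rw [det_apply, ← sum_subset (subset_univ _) h_vanish, sum_pair h_one_ne]
  have h_diag : ∀ i, M ((1 : Perm α) i) i = a := fun i => by
    rw [Perm.one_apply, hM, if_pos rfl, if_neg (hc_ne i), add_zero]
  have h_cycle : ∀ i, M (c⁻¹ i) i = b := fun i => by
    rw [hM, if_neg (hc_inv_ne i), if_pos (Perm.eq_inv_iff_eq.mp rfl), zero_add]
  simp only [h_diag, h_cycle, prod_const, card_univ, Perm.sign_one, Perm.sign_inv, one_smul]

theorem det_smul_one_add_smul_permMatrix_finRotate {n : ℕ} (hn : 2 ≤ n) (a b : R) :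
    (a • 1 + b • (finRotate n).permMatrix R).det = a ^ n - (-b) ^ n := by
  have hc_ne : ∀ x, finRotate n x ≠ x := fun x => by
    simpa [support_finRotate_of_le hn] using (finRotate n).mem_support (x := x)
  rw [det_smul_one_add_smul_permMatrix (isCycle_finRotate_of_le hn) hc_ne, Fintype.card_fin,
    sign_finRotate]
  obtain ⟨k, rfl⟩ : ∃ k, n = k + 1 := ⟨n - 1, by omega⟩
  rw [Nat.add_sub_cancel, Units.smul_def, zsmul_eq_mul]
  push_cast
  ring

theorem det_permMatrix_finRotate_add_transpose {n : ℕ} (hn : 2 ≤ n) {i : R} (hi : i * i = -1) :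
    ((finRotate n).permMatrix R + ((finRotate n).permMatrix R)ᵀ).det
      = i ^ n + (-i) ^ n - 2 * (-1) ^ n := by
  set P := (finRotate n).permMatrix R
  have h_factor : P * (P + Pᵀ) = (i • 1 + (1 : R) • P) * (-i • 1 + (1 : R) • P) := by
    have h_orth : P * Pᵀ = 1 := by
      rw [transpose_permMatrix, ← permMatrix_mul, inv_mul_cancel, permMatrix_one]
    rw [mul_add, h_orth, one_smul, add_mul, mul_add, mul_add, smul_one_mul, smul_one_mul,
      mul_smul_one, smul_smul, mul_neg, hi, neg_neg, one_smul, neg_smul]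
    abel
  have h_sign : ((((-1 : ℤˣ) ^ (n - 1) : ℤˣ) : ℤ) : R) = -(-1) ^ n := by
    obtain ⟨k, rfl⟩ : ∃ k, n = k + 1 := ⟨n - 1, by omega⟩
    push_cast
    ring
  have h_det := congrArg det h_factor
  rw [det_mul, det_mul, det_smul_one_add_smul_permMatrix_finRotate hn,
    det_smul_one_add_smul_permMatrix_finRotate hn, det_permutation, sign_finRotate, h_sign]
    at h_det
  have h_sq : ((-1 : R) ^ n) * (-1) ^ n = 1 := by rw [← mul_pow, neg_one_mul, neg_neg, one_pow]
  have h_conj : i ^ n * (-i) ^ n = 1 := by rw [← mul_pow, mul_neg, hi, neg_neg, one_pow]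
  linear_combination (-(-1) ^ n) * h_det + (i ^ n + (-i) ^ n - (P + Pᵀ).det - (-1) ^ n) * h_sq
    - (-1) ^ n * h_conj

end Matrix

namespace SimpleGraph

theorem adjMatrix_cycleGraph_eq {R : Type*} [AddMonoidWithOne R] {n : ℕ} (hn : 3 ≤ n) :
    (cycleGraph n).adjMatrix R = (finRotate n).permMatrix R + ((finRotate n).permMatrix R)ᵀ := by
  obtain ⟨m, rfl⟩ := Nat.exists_eq_add_of_le' hn
  ext u v
  have h_left : u - v = 1 ↔ v + 1 = u := by rw [sub_eq_iff_eq_add, add_comm 1 v, eq_comm]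
  have h_right : v - u = 1 ↔ u + 1 = v := by rw [sub_eq_iff_eq_add, add_comm 1 u, eq_comm]
  have h_not_both : ¬(u + 1 = v ∧ v + 1 = u) := by
    rintro ⟨rfl, h⟩
    have h2 : (1 + 1 : Fin (m + 3)) = 0 := by simpa [add_assoc] using h
    simp [Fin.ext_iff, Fin.val_add, Nat.mod_eq_of_lt] at h2
  simp only [adjMatrix_apply, cycleGraph_adj, h_left, h_right, Matrix.add_apply, transpose_apply,
    PEquiv.toMatrix_apply, toPEquiv_apply, finRotate_apply, Option.mem_some_iff]
  split_ifs <;> simp_all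

end SimpleGraph

theorem det_adjMatrix_cycle (n : ℕ) (hn : 3 ≤ n) :
    ((cycleGraph n).adjMatrix ℤ).det =
      if Odd n then 2
      else if n % 4 = 2 then -4
      else 0 := by
  have h_cast : (((cycleGraph n).adjMatrix ℤ).det : ℂ)
      = Complex.I ^ n + (-Complex.I) ^ n - 2 * (-1) ^ n := by
    rw [Int.cast_det, ← det_permMatrix_finRotate_add_transpose (by omega) Complex.I_mul_I,
      ← adjMatrix_cycleGraph_eq hn]
    congr 1
    ext u v
    simp [adjMatrix_apply, apply_ite]
  apply Int.cast_injective (α := ℂ)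
  rw [h_cast]
  obtain ⟨q, r, hr, rfl⟩ : ∃ q r, r < 4 ∧ n = 4 * q + r :=
    ⟨n / 4, n % 4, Nat.mod_lt _ (by norm_num), (Nat.div_add_mod n 4).symm⟩
  simp only [Nat.odd_iff, show (4 * q + r) % 2 = r % 2 by omega, show (4 * q + r) % 4 = r by omega]
  interval_cases r <;> simp [pow_mul, pow_succ] <;> norm_num
end

section
/- Let n > 1 be an integer. Then the product ∏_{j=1}^{2n} ((-1)^j + 2 cos(j π / n)) equals -3 if n ≡ 2 or n ≡ -2 (mod 6); equals -9 if n ≡ 1 or n ≡ -1 (mod 6); and equals 0 if n ≡ 0 or n ≡ 3 (mod 6). -/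
/-!
Pairing the factors `j = 2k + 1` and `j = 2k + 2`, each half of the product is, up to the sign
`(-1)^n`, a product `∏_{k<n} (2 cos θ - 2 cos (α + 2πk/n))` with `θ = π/3`, resp. `θ = 2π/3`.
Writing `2 cos t = e^{it} + e^{-it}`, such a product factors over the `n`-th roots of unity and
equals `2 cos (nθ) - 2 cos (nα)`. The whole product becomes `(x + 2)² (x - 2)` with
`x = 2 cos (nπ/3)`, and `x` depends only on `n mod 6`.
-/

open Real Finset

theorem IsPrimitiveRoot.prod_range_sub_pow_mul_eq_pow_sub_pow {R : Type*} [CommRing R]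
    [IsDomain R] {ζ : R} {n : ℕ} (hζ : IsPrimitiveRoot ζ n) (hn : 0 < n) (x a : R) :
    ∏ i ∈ range n, (x - ζ ^ i * a) = x ^ n - a ^ n := by
  have := congrArg (Polynomial.eval x) (X_pow_sub_C_eq_prod hζ hn (rfl : a ^ n = _))
  simpa [Polynomial.eval_prod] using this.symm

theorem mul_add_inv_sub_add_inv {K : Type*} [Field K] {w b : K} (hw : w ≠ 0) (hb : b ≠ 0) :
    w * (w + w⁻¹ - (b + b⁻¹)) = (w - b) * (w - b⁻¹) := by
  field_simp
  ring

theorem IsPrimitiveRoot.prod_range_add_inv_sub_add_inv {K : Type*} [Field K] {ζ : K} {n : ℕ}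
    (hζ : IsPrimitiveRoot ζ n) (hn : 0 < n) {w a : K} (hw : w ≠ 0) (ha : a ≠ 0) :
    ∏ i ∈ range n, (w + w⁻¹ - (ζ ^ i * a + (ζ ^ i * a)⁻¹)) =
      w ^ n + (w ^ n)⁻¹ - (a ^ n + (a ^ n)⁻¹) := by
  have hζa : ∀ i, ζ ^ i * a ≠ 0 := fun i ↦ mul_ne_zero (pow_ne_zero i (hζ.ne_zero hn.ne')) ha
  apply mul_left_cancel₀ (pow_ne_zero n hw)
  calc w ^ n * ∏ i ∈ range n, (w + w⁻¹ - (ζ ^ i * a + (ζ ^ i * a)⁻¹))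
      = ∏ i ∈ range n, w * (w + w⁻¹ - (ζ ^ i * a + (ζ ^ i * a)⁻¹)) := by
        rw [prod_mul_distrib, prod_const, card_range]
    _ = ∏ i ∈ range n, (w - ζ ^ i * a) * (w - ζ⁻¹ ^ i * a⁻¹) := prod_congr rfl fun i _ ↦ by
        rw [mul_add_inv_sub_add_inv hw (hζa i), mul_inv, inv_pow]
    _ = (w ^ n - a ^ n) * (w ^ n - a⁻¹ ^ n) := by
        rw [prod_mul_distrib, hζ.prod_range_sub_pow_mul_eq_pow_sub_pow hn,
          hζ.inv.prod_range_sub_pow_mul_eq_pow_sub_pow hn]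
    _ = w ^ n * (w ^ n + (w ^ n)⁻¹ - (a ^ n + (a ^ n)⁻¹)) := by
        rw [inv_pow]
        field_simp
        ring

theorem Complex.two_cos_eq_exp_add_inv (x : ℂ) : 2 * cos x = exp (x * I) + (exp (x * I))⁻¹ := by
  rw [two_cos, ← exp_neg, neg_mul]

theorem prod_range_two_cos_sub_two_cos {n : ℕ} (hn : n ≠ 0) (θ α : ℝ) :
    ∏ k ∈ range n, (2 * cos θ - 2 * cos (α + 2 * π * k / n)) =
      2 * cos (n * θ) - 2 * cos (n * α) := by
  apply Complex.ofReal_injective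
  push_cast
  have rot : ∀ k : ℕ, Complex.exp ((α + 2 * π * k / n) * Complex.I) =
      Complex.exp (2 * π * Complex.I / n) ^ k * Complex.exp (α * Complex.I) := by
    intro k
    rw [← Complex.exp_nat_mul, ← Complex.exp_add]
    ring_nf
  simp only [Complex.two_cos_eq_exp_add_inv, rot, mul_assoc (n : ℂ), Complex.exp_nat_mul]
  exact (Complex.isPrimitiveRoot_exp n hn).prod_range_add_inv_sub_add_inv (Nat.pos_of_ne_zero hn)
    (Complex.exp_ne_zero _) (Complex.exp_ne_zero _)

theorem Finset.prod_Icc_one_two_mul {M : Type*} [CommMonoid M] (f : ℕ → M) (m : ℕ) :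
    ∏ j ∈ Icc 1 (2 * m), f j = ∏ k ∈ range m, f (2 * k + 1) * f (2 * k + 2) := by
  induction m with
  | zero => simp
  | succ m ih =>
    rw [show 2 * (m + 1) = 2 * m + 1 + 1 by ring, prod_Icc_succ_top (by omega),
      prod_Icc_succ_top (by omega), ih, prod_range_succ, mul_assoc]

theorem Real.cos_two_pi_div_three : cos (2 * π / 3) = -1 / 2 := by
  rw [show 2 * π / 3 = π - π / 3 by ring, cos_pi_sub, cos_pi_div_three]
  norm_num

theorem Real.cos_four_pi_div_three : cos (4 * π / 3) = -1 / 2 := by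
  rw [show 4 * π / 3 = π / 3 + π by ring, cos_add_pi, cos_pi_div_three]
  norm_num

theorem Real.cos_five_pi_div_three : cos (5 * π / 3) = 1 / 2 := by
  rw [show 5 * π / 3 = -(π / 3) + 2 * π by ring, cos_add_two_pi, cos_neg, cos_pi_div_three]

theorem cos_nat_mul_pi_div_three_eq_mod_six (n : ℕ) :
    cos (n * π / 3) = cos ((n % 6 : ℕ) * π / 3) := by
  conv_lhs => rw [← Nat.mod_add_div n 6]
  push_cast
  rw [show ((n % 6 : ℕ) + 6 * (n / 6 : ℕ)) * π / 3 = (n % 6 : ℕ) * π / 3 + (n / 6 : ℕ) * (2 * π) by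
    ring, cos_add_nat_mul_two_pi]

theorem prod_neg_one_pow_add_two_cos {n : ℕ} (hn : n ≠ 0) :
    ∏ j ∈ Icc 1 (2 * n), ((-1 : ℝ) ^ j + 2 * cos (j * π / n)) =
      (2 * cos (n * π / 3) + 2) ^ 2 * (2 * cos (n * π / 3) - 2) := by
  have hnR : (n : ℝ) ≠ 0 := Nat.cast_ne_zero.mpr hn
  have odd_terms : ∏ k ∈ range n, ((-1 : ℝ) ^ (2 * k + 1) + 2 * cos ((2 * k + 1 : ℕ) * π / n)) =
      (-1) ^ n * (2 * cos (n * π / 3) + 2) := by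
    have h : ∀ k : ℕ, (-1 : ℝ) ^ (2 * k + 1) + 2 * cos ((2 * k + 1 : ℕ) * π / n) =
        -(2 * cos (π / 3) - 2 * cos (π / n + 2 * π * k / n)) := by
      intro k
      rw [pow_succ, pow_mul, cos_pi_div_three]
      push_cast
      ring_nf
    rw [prod_congr rfl fun k _ ↦ h k, prod_neg, card_range, prod_range_two_cos_sub_two_cos hn,
      mul_div_cancel₀ π hnR, cos_pi, mul_div_assoc']
    ring
  have even_terms : ∏ k ∈ range n, ((-1 : ℝ) ^ (2 * k + 2) + 2 * cos ((2 * k + 2 : ℕ) * π / n)) =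
      (-1) ^ n * (2 * cos (2 * (n * π / 3)) - 2) := by
    have h : ∀ k : ℕ, (-1 : ℝ) ^ (2 * k + 2) + 2 * cos ((2 * k + 2 : ℕ) * π / n) =
        -(2 * cos (2 * π / 3) - 2 * cos (2 * π / n + 2 * π * k / n)) := by
      intro k
      rw [pow_add, pow_mul, cos_two_pi_div_three]
      push_cast
      ring_nf
    rw [prod_congr rfl fun k _ ↦ h k, prod_neg, card_range, prod_range_two_cos_sub_two_cos hn,
      mul_div_cancel₀ (2 * π) hnR, cos_two_pi, mul_one,
      show n * (2 * π / 3) = 2 * (n * π / 3) by ring]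
  have sign_sq : (-1 : ℝ) ^ n * (-1) ^ n = 1 := by rw [← mul_pow]; norm_num
  rw [prod_Icc_one_two_mul, prod_mul_distrib, odd_terms, even_terms, cos_two_mul]
  linear_combination
    (2 * cos (n * π / 3) + 2) * (2 * (2 * cos (n * π / 3) ^ 2 - 1) - 2) * sign_sq

theorem prod_mobius_eigenvalues (n : ℕ) (hn : 1 < n) :
    (∏ j ∈ Finset.Icc 1 (2 * n), ((-1 : ℝ) ^ j + 2 * Real.cos (j * π / n))) =
      if n % 6 = 2 ∨ n % 6 = 4 then -3
      else if n % 6 = 1 ∨ n % 6 = 5 then -9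
      else 0 := by
  rw [prod_neg_one_pow_add_two_cos (by omega), cos_nat_mul_pi_div_three_eq_mod_six]
  have h6 : n % 6 < 6 := Nat.mod_lt n (by norm_num)
  interval_cases n % 6 <;>
    norm_num [cos_pi_div_three, cos_two_pi_div_three, cos_four_pi_div_three, cos_five_pi_div_three]
end

section
/- Let m > 1 and n > 1 be integers. Then 2^((m-1)(n-1)) · ∏_{i=1}^{m-1} ∏_{j=1}^{n-1} sin(i π / m + j π / n) = ∏_{i=1}^{m-1} sin(n i π / m) / ∏_{i=1}^{m-1} sin(i π / m). -/
open Real Finset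

/-!
For fixed `θ`, the factors `2 sin (θ + jπ/n) = e^{i(π/2 - θ - jπ/n)} (1 - ζ^j e^{2iθ})`, with
`ζ = e^{2πi/n}`, multiply over `j < n` to `e^{i(π/2 - nθ)} (1 - e^{2inθ}) = 2 sin (nθ)`, since
`∏ (1 - ζ^j a) = 1 - a^n`. Removing the factor `j = 0` gives, for `θ = iπ/m`,
`∏_{j=1}^{n-1} 2 sin (iπ/m + jπ/n) = sin (niπ/m) / sin (iπ/m)`; multiply over `i`.
-/
theorem IsPrimitiveRoot.one_sub_pow_eq_prod {R : Type*} [CommRing R] [IsDomain R] {n : ℕ}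
    {ζ : R} (hζ : IsPrimitiveRoot ζ n) (hn : 0 < n) (a : R) :
    1 - a ^ n = ∏ j ∈ range n, (1 - ζ ^ j * a) := by
  simpa [Polynomial.eval_prod] using
    congrArg (Polynomial.eval 1) (X_pow_sub_C_eq_prod hζ hn (rfl : a ^ n = a ^ n))

namespace Complex

theorem two_sin_eq_exp_mul_one_sub_exp (w : ℂ) :
    2 * sin w = exp ((π / 2 - w) * I) * (1 - exp (2 * w * I)) := by
  have hsplit : exp ((π / 2 - w) * I) = I * exp (-w * I) := by
    rw [show (π / 2 - w) * I = π / 2 * I + -w * I by ring, exp_add, exp_pi_div_two_mul_I]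
  have hdouble : exp (-w * I) * exp (2 * w * I) = exp (w * I) := by
    rw [← exp_add]; ring_nf
  rw [sin, hsplit]
  linear_combination I * hdouble

theorem sum_range_pi_div_two_sub_add_mul_pi_div {n : ℕ} (hn : n ≠ 0) (z : ℂ) :
    ∑ j ∈ range n, (π / 2 - (z + j * π / n)) = π / 2 - n * z := by
  have hgauss := congrArg (Nat.cast (R := ℂ)) (sum_range_id_mul_two n)
  push_cast [Nat.cast_sub (Nat.one_le_iff_ne_zero.mpr hn)] at hgauss
  have hn' : (n : ℂ) ≠ 0 := Nat.cast_ne_zero.mpr hn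
  calc ∑ j ∈ range n, (π / 2 - (z + j * π / n))
      = ∑ j ∈ range n, ((π / 2 - z) - π / n * j) := by
        refine sum_congr rfl fun j _ => ?_
        ring
    _ = π / 2 - n * z := by
        rw [sum_sub_distrib, sum_const, card_range, nsmul_eq_mul, ← mul_sum]
        field_simp
        linear_combination -π * hgauss

theorem prod_two_sin_add_mul_pi_div {n : ℕ} (hn : 0 < n) (z : ℂ) :
    ∏ j ∈ range n, 2 * sin (z + j * π / n) = 2 * sin (n * z) := by
  have hζ := isPrimitiveRoot_exp n hn.ne'
  calc ∏ j ∈ range n, 2 * sin (z + j * π / n)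
      = ∏ j ∈ range n, exp ((π / 2 - (z + j * π / n)) * I) *
          (1 - exp (2 * π * I / n) ^ j * exp (2 * z * I)) := by
        refine prod_congr rfl fun j _ => ?_
        rw [two_sin_eq_exp_mul_one_sub_exp, ← exp_nat_mul, ← exp_add]
        congr 4
        field_simp
        ring
    _ = exp ((π / 2 - n * z) * I) * (1 - exp (2 * z * I) ^ n) := by
        rw [prod_mul_distrib, ← exp_sum, ← sum_mul, sum_range_pi_div_two_sub_add_mul_pi_div hn.ne',
          hζ.one_sub_pow_eq_prod hn]
    _ = 2 * sin (n * z) := by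
        rw [two_sin_eq_exp_mul_one_sub_exp, ← exp_nat_mul]
        ring_nf

end Complex

namespace Real

theorem prod_two_sin_add_mul_pi_div {n : ℕ} (hn : 0 < n) (θ : ℝ) :
    ∏ j ∈ range n, 2 * sin (θ + j * π / n) = 2 * sin (n * θ) := by
  exact_mod_cast Complex.prod_two_sin_add_mul_pi_div hn θ

theorem prod_Icc_two_sin_add_mul_pi_div {n : ℕ} (hn : 0 < n) {θ : ℝ} (hθ : sin θ ≠ 0) :
    ∏ j ∈ Icc 1 (n - 1), 2 * sin (θ + j * π / n) = sin (n * θ) / sin θ := by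
  have h := prod_two_sin_add_mul_pi_div hn θ
  have hIcc : Icc 1 (n - 1) = Ico 1 n := by ext; simp only [mem_Icc, mem_Ico]; omega
  rw [range_eq_Ico, prod_eq_prod_Ico_succ_bot hn, ← hIcc] at h
  simp only [CharP.cast_eq_zero, zero_mul, zero_div, add_zero] at h
  rw [eq_div_iff hθ]
  linear_combination h / 2

theorem sin_nat_mul_pi_div_pos {i m : ℕ} (hi : 0 < i) (him : i < m) : 0 < sin (i * π / m) := by
  have hi' : (0 : ℝ) < i := Nat.cast_pos.mpr hi
  have him' : (i : ℝ) < m := Nat.cast_lt.mpr him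
  apply sin_pos_of_pos_of_lt_pi (div_pos (mul_pos hi' pi_pos) (hi'.trans him'))
  rw [div_lt_iff₀ (hi'.trans him')]
  nlinarith [pi_pos]

end Real

theorem prod_sin_grid_general (m n : ℕ) (hn : 1 < n) :
    (2 : ℝ) ^ ((m - 1) * (n - 1)) *
        ∏ i ∈ Finset.Icc 1 (m - 1), ∏ j ∈ Finset.Icc 1 (n - 1),
          Real.sin (i * π / m + j * π / n) =
      (∏ i ∈ Finset.Icc 1 (m - 1), Real.sin (n * i * π / m)) /
        ∏ i ∈ Finset.Icc 1 (m - 1), Real.sin (i * π / m) := by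
  have hrow : ∀ i ∈ Icc 1 (m - 1), ∏ j ∈ Icc 1 (n - 1), 2 * sin (i * π / m + j * π / n)
      = sin (n * i * π / m) / sin (i * π / m) := by
    intro i hi
    obtain ⟨hi₁, hi₂⟩ := mem_Icc.mp hi
    rw [prod_Icc_two_sin_add_mul_pi_div (by omega) (sin_nat_mul_pi_div_pos hi₁ (by omega)).ne',
      mul_div_assoc', mul_assoc]
  calc (2 : ℝ) ^ ((m - 1) * (n - 1)) *
        ∏ i ∈ Icc 1 (m - 1), ∏ j ∈ Icc 1 (n - 1), sin (i * π / m + j * π / n)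
      = ∏ i ∈ Icc 1 (m - 1), ∏ j ∈ Icc 1 (n - 1), 2 * sin (i * π / m + j * π / n) := by
        rw [mul_comm (m - 1), pow_mul]
        simp [prod_mul_distrib, prod_const]
    _ = _ := by rw [prod_congr rfl hrow, prod_div_distrib]

theorem prod_sin_grid (m n : ℕ) (hm : 1 < m) (hn : 1 < n) :
    (2 : ℝ) ^ ((m - 1) * (n - 1)) *
        ∏ i ∈ Finset.Icc 1 (m - 1), ∏ j ∈ Finset.Icc 1 (n - 1),
          Real.sin (i * π / m + j * π / n) =
      (∏ i ∈ Finset.Icc 1 (m - 1), Real.sin (n * i * π / m)) /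
        ∏ i ∈ Finset.Icc 1 (m - 1), Real.sin (i * π / m) :=
  prod_sin_grid_general m n hn
end

section
/- Let n ≥ 1 be an integer and regard the adjacency matrix of the path graph P_n on n vertices as a real matrix. Then for every real number x, det(x · I_n - A(P_n)) = ∏_{k=1}^{n} (x - 2 cos(k π / (n+1))). -/
/-!
For `1 ≤ k ≤ n` and `θ = kπ/(n+1)`, the vector `(sin((j+1)θ))_j` is an eigenvector of `A(P_n)`
with eigenvalue `2 cos θ`: the identity `sin(jθ) + sin((j+2)θ) = 2 cos θ sin((j+1)θ)` is the
eigen-equation at the inner vertices, and `sin 0 = sin((n+1)θ) = 0` makes it hold at the two ends.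
These `n` eigenvalues are distinct because `cos` is injective on `[0, π]`, so the monic
characteristic polynomial of degree `n` is the product of the corresponding linear factors.
-/

open SimpleGraph Matrix Real Finset Polynomial

theorem Polynomial.eq_prod_X_sub_C_of_injOn_of_isRoot {R ι : Type*} [CommRing R] [IsDomain R]
    {p : R[X]} (hp : p.Monic) {s : Finset ι} {r : ι → R} (hr : Set.InjOn r s)
    (hdeg : p.natDegree = #s) (hroot : ∀ i ∈ s, p.IsRoot (r i)) :
    p = ∏ i ∈ s, (X - C (r i)) := by
  have hdvd : ∏ i ∈ s, (X - C (r i)) ∣ p := by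
    have hle : s.val.map r ≤ p.roots :=
      (Multiset.le_iff_subset (s.nodup.map_on hr)).2 fun a ha => by
        obtain ⟨i, hi, rfl⟩ := Multiset.mem_map.1 ha
        exact (mem_roots hp.ne_zero).2 (hroot i hi)
    have := (Multiset.prod_X_sub_C_dvd_iff_le_roots hp.ne_zero _).2 hle
    rwa [Multiset.map_map] at this
  refine eq_of_monic_of_dvd_of_natDegree_le (monic_prod_of_monic _ _ fun i _ => monic_X_sub_C _)
    hp hdvd ?_
  rw [natDegree_prod_of_monic _ _ fun i _ => monic_X_sub_C _]
  simp [hdeg]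

theorem Matrix.isRoot_charpoly_of_mulVec_eq_smul {R n : Type*} [CommRing R] [IsDomain R]
    [Fintype n] [DecidableEq n] {A : Matrix n n R} {v : n → R} {μ : R} (hv : v ≠ 0)
    (h : A *ᵥ v = μ • v) : A.charpoly.IsRoot μ := by
  rw [IsRoot, eval_charpoly, ← exists_mulVec_eq_zero_iff]
  exact ⟨v, hv, by ext i; simp [sub_mulVec, h]⟩

theorem Real.injOn_cos_nat_mul_pi_div (m : ℕ) :
    Set.InjOn (fun k : ℕ => cos (k * π / m)) (Set.Iic m) := by
  rcases eq_or_ne m 0 with rfl | hm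
  · intro a ha b hb _
    simp_all
  have hmem : ∀ k ∈ Set.Iic m, (k : ℝ) * π / m ∈ Set.Icc 0 π := fun k hk =>
    ⟨by positivity, by
      rw [mul_div_right_comm]
      exact mul_le_of_le_one_left pi_pos.le (div_le_one_of_le₀ (mod_cast hk) (by positivity))⟩
  intro a ha b hb hab
  have := injOn_cos (hmem a ha) (hmem b hb) hab
  field_simp at this
  exact_mod_cast this

namespace SimpleGraph

variable {n : ℕ} [DecidableRel (pathGraph n).Adj]

theorem adjMatrix_pathGraph_mulVec_apply {R : Type*} [NonAssocSemiring R] {f : ℕ → R}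
    (h₀ : f 0 = 0) (hₙ : f (n + 1) = 0) (j : Fin n) :
    ((pathGraph n).adjMatrix R *ᵥ fun i => f (i + 1)) j = f j + f (j + 2) := by
  have hdown : ∑ i ∈ range n, (if i + 1 = j then f (i + 1) else 0) = f j := by
    have := sum_range_succ' (fun i => if i = (j : ℕ) then f i else 0) n
    rw [sum_ite_eq', if_pos (mem_range.2 (by omega)), h₀, ite_self, add_zero] at this
    exact this.symm
  have hup : ∑ i ∈ range n, (if i = j + 1 then f (i + 1) else 0) = f (j + 2) := by
    have := sum_range_succ (fun i => if i = (j : ℕ) + 1 then f (i + 1) else 0) n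
    rw [sum_ite_eq', if_pos (mem_range.2 (by omega)), hₙ, ite_self, add_zero] at this
    exact this.symm
  rw [adjMatrix_mulVec_apply, neighborFinset_eq_filter, sum_filter, ← hdown, ← hup,
    ← sum_add_distrib]
  simp_rw [pathGraph_adj]
  rw [Fin.sum_univ_eq_sum_range (fun i => if (j : ℕ) + 1 = i ∨ i + 1 = j then f (i + 1) else 0)]
  refine sum_congr rfl fun i _ => ?_
  split_ifs <;> first | omega | simp

theorem adjMatrix_pathGraph_mulVec_sin {θ : ℝ} (hθ : sin ((n + 1) * θ) = 0) :
    (pathGraph n).adjMatrix ℝ *ᵥ (fun j : Fin n => sin ((j + 1) * θ)) =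
      (2 * cos θ) • fun j : Fin n => sin ((j + 1) * θ) := by
  ext j
  have h := adjMatrix_pathGraph_mulVec_apply (R := ℝ) (f := fun m : ℕ => sin (m * θ))
    (by simp) (by exact_mod_cast hθ) j
  push_cast at h
  rw [h, Pi.smul_apply, smul_eq_mul, sin_add_sin,
    show ((j : ℝ) * θ + (j + 2) * θ) / 2 = (j + 1) * θ by ring,
    show ((j : ℝ) * θ - (j + 2) * θ) / 2 = -θ by ring, cos_neg]
  ring

theorem isRoot_charpoly_adjMatrix_pathGraph {k : ℕ} (hk₁ : 1 ≤ k) (hkn : k ≤ n) :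
    ((pathGraph n).adjMatrix ℝ).charpoly.IsRoot (2 * cos (k * π / (n + 1))) := by
  refine isRoot_charpoly_of_mulVec_eq_smul (fun h => ?_) (adjMatrix_pathGraph_mulVec_sin ?_)
  · have hsin := congrFun h ⟨0, by omega⟩
    simp only [CharP.cast_eq_zero, zero_add, one_mul, Pi.zero_apply] at hsin
    refine (sin_pos_of_pos_of_lt_pi (by positivity) ?_).ne' hsin
    rw [div_lt_iff₀ (by positivity), mul_comm π]
    gcongr
    exact_mod_cast Nat.lt_succ_of_le hkn
  · rw [mul_div_cancel₀ _ (by positivity), sin_nat_mul_pi]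

end SimpleGraph

open scoped Classical in
theorem charpoly_path_general (n : ℕ) (x : ℝ) :
    (x • (1 : Matrix (Fin n) (Fin n) ℝ) - (pathGraph n).adjMatrix ℝ).det =
      ∏ k ∈ Finset.Icc 1 n, (x - 2 * Real.cos (k * π / (n + 1))) := by
  have hinj : Set.InjOn (fun k : ℕ => 2 * cos (k * π / (n + 1))) (Icc 1 n) := by
    have := injOn_cos_nat_mul_pi_div (n + 1)
    push_cast at this
    exact ((mul_right_injective₀ two_ne_zero).comp_injOn this).mono fun k hk => by
      simp only [coe_Icc, Set.mem_Icc, Set.mem_Iic] at hk ⊢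
      omega
  have hroot (k : ℕ) (hk : k ∈ Icc 1 n) := isRoot_charpoly_adjMatrix_pathGraph (n := n)
    (mem_Icc.1 hk).1 (mem_Icc.1 hk).2
  rw [smul_one_eq_diagonal, ← scalar_apply, ← eval_charpoly,
    eq_prod_X_sub_C_of_injOn_of_isRoot (charpoly_monic _) hinj (by simp) hroot, eval_prod]
  simp

open scoped Classical in
theorem charpoly_path (n : ℕ) (hn : 1 ≤ n) (x : ℝ) :
    (x • (1 : Matrix (Fin n) (Fin n) ℝ) - (pathGraph n).adjMatrix ℝ).det =
      ∏ k ∈ Finset.Icc 1 n, (x - 2 * Real.cos (k * π / (n + 1))) :=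
  charpoly_path_general n x
end
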